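/- Let 𝒞 be a class of directed multigraphs closed under taking minors, and let Γ be a UCRPQ. Define App(Γ,𝒞) as the (possibly infinite) union of all CRPQs α whose underlying graph is in 𝒞 such that α is a contraction of some CQ η for which some expansion ξ of Γ has a homomorphism ξ → η. Then: (1) every member of App(Γ,𝒞) has underlying graph in 𝒞; (2) App(Γ,𝒞) is contained in Γ; (3) for every (possibly infinite) union Δ of CRPQs with underlying graphs in 𝒞, if Δ is contained in Γ then Δ is contained in App(Γ,𝒞). Hence App(Γ,𝒞) is the maximal under-approximation of Γ by infinitary unions of CRPQs over 𝒞. -/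

import Mathlib

/-- A graph database over alphabet `A`: an edge-labelled directed graph. -/
structure DB (A : Type) where
  V : Type
  edge : V → A → V → Prop

/-- `G.path w u v`: there is a directed path from `u` to `v` labelled by the word `w`. -/
def DB.path {A : Type} (G : DB A) : List A → G.V → G.V → Prop
  | [], u, v => u = v
  | a :: w, u, v => ∃ x, G.edge u a x ∧ DB.path G w x v

/-- A finite directed multigraph with a distinguished set of output vertices. -/
structure MGraph where
  V : Type
  E : Type
  src : E → V
  tgt : E → V
  out : Set V

namespace MGraph

/-- An internal vertex: a non-output vertex of in-degree 1 and out-degree 1. -/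
def Internal (G : MGraph) (v : G.V) : Prop :=
  v ∉ G.out ∧ (∃! e, G.tgt e = v) ∧ (∃! e, G.src e = v)

def External (G : MGraph) (v : G.V) : Prop := ¬ G.Internal v

/-- A list of edges forms a directed walk. -/
def IsWalk (G : MGraph) : List G.E → Prop
  | [] => True
  | [_] => True
  | e₁ :: e₂ :: es => G.tgt e₁ = G.src e₂ ∧ G.IsWalk (e₂ :: es)

/-- The list of vertices visited by a walk. -/
def walkVerts (G : MGraph) : List G.E → List G.V
  | [] => []
  | e :: es => G.src e :: G.tgt e :: es.map G.tgt

/-- A one-way internal path: a nonempty simple directed path all of whose intermediate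
vertices are internal (the first and last vertex may coincide). -/
def IsInternalPath (G : MGraph) (es : List G.E) : Prop :=
  es ≠ [] ∧ G.IsWalk es ∧
  (∀ v ∈ (G.walkVerts es).tail.dropLast, G.Internal v) ∧
  (G.walkVerts es).tail.Nodup ∧ (G.walkVerts es).dropLast.Nodup

/-- A segment: a maximal one-way internal path. -/
def IsSegment (G : MGraph) (es : List G.E) : Prop :=
  G.IsInternalPath es ∧ (∀ e, ¬ G.IsInternalPath (e :: es)) ∧
  (∀ e, ¬ G.IsInternalPath (es ++ [e]))

def firstV (G : MGraph) (es : List G.E) : Option G.V := es.head?.map G.src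

def lastV (G : MGraph) (es : List G.E) : Option G.V := es.getLast?.map G.tgt

end MGraph

/-- The number of segments of a multigraph, counting segments as sets of edges. -/
noncomputable def segCount (G : MGraph) : ℕ :=
  {S : Set G.E | ∃ es, G.IsSegment es ∧ S = {e | e ∈ es}}.ncard

/-- Isomorphism of directed multigraphs. -/
def IsIso (G H : MGraph) : Prop :=
  ∃ (fV : G.V → H.V) (fE : G.E → H.E),
    Function.Bijective fV ∧ Function.Bijective fE ∧
    (∀ e, H.src (fE e) = fV (G.src e)) ∧ (∀ e, H.tgt (fE e) = fV (G.tgt e))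

/-- `H` is obtained from `G` by deleting one edge. -/
def IsEdgeDeletion (G H : MGraph) : Prop :=
  ∃ (e₀ : G.E) (f : G.V → H.V) (g : {e : G.E // e ≠ e₀} → H.E),
    Function.Bijective f ∧ Function.Bijective g ∧
    (∀ e, H.src (g e) = f (G.src e.1)) ∧ (∀ e, H.tgt (g e) = f (G.tgt e.1))

/-- `H` is obtained from `G` by deleting one vertex and all its incident edges. -/
def IsVertexDeletion (G H : MGraph) : Prop :=
  ∃ (v₀ : G.V) (f : {v : G.V // v ≠ v₀} → H.V)
    (g : {e : G.E // G.src e ≠ v₀ ∧ G.tgt e ≠ v₀} → H.E),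
    Function.Bijective f ∧ Function.Bijective g ∧
    (∀ e, H.src (g e) = f ⟨G.src e.1, e.2.1⟩) ∧ (∀ e, H.tgt (g e) = f ⟨G.tgt e.1, e.2.2⟩)

/-- `H` is obtained from `G` by contracting the edge `e₀`
(identifying its two endpoints and removing the edge). -/
def IsEdgeContractionAt (G H : MGraph) (e₀ : G.E) : Prop :=
  ∃ (f : G.V → H.V) (g : {e : G.E // e ≠ e₀} → H.E),
    Function.Surjective f ∧ Function.Bijective g ∧
    (∀ u v, f u = f v ↔
      (u = v ∨ (u = G.src e₀ ∧ v = G.tgt e₀) ∨ (u = G.tgt e₀ ∧ v = G.src e₀))) ∧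
    (∀ e, H.src (g e) = f (G.src e.1)) ∧ (∀ e, H.tgt (g e) = f (G.tgt e.1))

def IsEdgeContraction (G H : MGraph) : Prop := ∃ e₀, IsEdgeContractionAt G H e₀

def MinorStep (G H : MGraph) : Prop :=
  IsIso G H ∨ IsEdgeDeletion G H ∨ IsVertexDeletion G H ∨ IsEdgeContraction G H

/-- `H` is a minor of `G`: obtained by a sequence of edge deletions,
vertex deletions and edge contractions (up to isomorphism). -/
def IsMinorOf (H G : MGraph) : Prop := Relation.ReflTransGen MinorStep G H

/-- A conjunctive regular path query: a finite directed multigraph whose edges (atoms)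
are labelled by languages, with a tuple of output variables. -/
structure CRPQ (A : Type) (n : ℕ) where
  V : Type
  I : Type
  finV : Finite V
  finI : Finite I
  src : I → V
  tgt : I → V
  lang : I → Set (List A)
  out : Fin n → V

/-- Satisfaction of a CRPQ on a database at an output tuple. -/
def CRPQ.sat {A : Type} {n : ℕ} (γ : CRPQ A n) (G : DB A) (t : Fin n → G.V) : Prop :=
  ∃ h : γ.V → G.V, (∀ k, h (γ.out k) = t k) ∧
    ∀ i, ∃ w ∈ γ.lang i, G.path w (h (γ.src i)) (h (γ.tgt i))

/-- A choice of expansion words: one word from each atom language. -/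
def CRPQ.IsExpansionWords {A : Type} {n : ℕ} (γ : CRPQ A n) (w : γ.I → List A) : Prop :=
  ∀ i, w i ∈ γ.lang i

/-- Satisfaction of the expansion of `γ` determined by the words `w`. -/
def CRPQ.expSat {A : Type} {n : ℕ} (γ : CRPQ A n) (w : γ.I → List A) (G : DB A)
    (t : Fin n → G.V) : Prop :=
  ∃ h : γ.V → G.V, (∀ k, h (γ.out k) = t k) ∧ ∀ i, G.path (w i) (h (γ.src i)) (h (γ.tgt i))

/-- A CQ is a CRPQ all of whose atom languages are single-letter singletons. -/
def CRPQ.IsCQ {A : Type} {n : ℕ} (η : CRPQ A n) : Prop := ∀ i, ∃ a : A, η.lang i = {[a]}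

/-- Vertices of the expansion of `γ` along `w`, before identifying endpoints of
empty-word atoms: original variables plus fresh intermediate path variables. -/
def CanonBase {A : Type} {n : ℕ} (γ : CRPQ A n) (w : γ.I → List A) : Type :=
  γ.V ⊕ (Σ i : γ.I, Fin ((w i).length - 1))

/-- The `k`-th vertex on the expansion path of atom `i`. -/
def nodeAt {A : Type} {n : ℕ} (γ : CRPQ A n) (w : γ.I → List A) (i : γ.I) (k : ℕ) :
    CanonBase γ w :=
  if h : 0 < k ∧ k < (w i).length then Sum.inr ⟨i, ⟨k - 1, by omega⟩⟩
  else if k = 0 then Sum.inl (γ.src i) else Sum.inl (γ.tgt i)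

/-- Identifications forced by empty-word atoms. -/
def canonRel {A : Type} {n : ℕ} (γ : CRPQ A n) (w : γ.I → List A) :
    CanonBase γ w → CanonBase γ w → Prop :=
  fun u v => ∃ i, w i = [] ∧ u = Sum.inl (γ.src i) ∧ v = Sum.inl (γ.tgt i)

/-- The canonical database of the expansion of `γ` along the words `w`. -/
def canonDB {A : Type} {n : ℕ} (γ : CRPQ A n) (w : γ.I → List A) : DB A where
  V := Quot (canonRel γ w)
  edge u a v := ∃ (i : γ.I) (k : ℕ) (hk : k < (w i).length),
    (w i).get ⟨k, hk⟩ = a ∧ u = Quot.mk _ (nodeAt γ w i k) ∧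
      v = Quot.mk _ (nodeAt γ w i (k + 1))

/-- The canonical output tuple of the canonical database. -/
def canonOut {A : Type} {n : ℕ} (γ : CRPQ A n) (w : γ.I → List A) :
    Fin n → (canonDB γ w).V :=
  fun k => Quot.mk (canonRel γ w) (Sum.inl (γ.out k))

/-- A labelled CQ: a finite directed multigraph with letter-labelled edges and outputs. -/
structure LCQ (A : Type) (n : ℕ) where
  V : Type
  E : Type
  finV : Finite V
  finE : Finite E
  src : E → V
  tgt : E → V
  lab : E → A
  out : Fin n → V

/-- A homomorphism of labelled CQs: preserves edges, labels and outputs pointwise. -/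
def LCQHom {A : Type} {n : ℕ} (P Q : LCQ A n) (fV : P.V → Q.V) (fE : P.E → Q.E) : Prop :=
  (∀ e, Q.src (fE e) = fV (P.src e)) ∧ (∀ e, Q.tgt (fE e) = fV (P.tgt e)) ∧
  (∀ e, Q.lab (fE e) = P.lab e) ∧ (∀ k, fV (P.out k) = Q.out k)

def LCQ.HomTo {A : Type} {n : ℕ} (P Q : LCQ A n) : Prop := ∃ fV fE, LCQHom P Q fV fE

def HomEquiv {A : Type} {n : ℕ} (P Q : LCQ A n) : Prop := P.HomTo Q ∧ Q.HomTo P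

/-- `C` is a core of `P`: hom-equivalent to `P`, and every endomorphism of `C`
is an automorphism. -/
def IsCoreOf {A : Type} {n : ℕ} (C P : LCQ A n) : Prop :=
  HomEquiv C P ∧
    ∀ fV fE, LCQHom C C fV fE → Function.Bijective fV ∧ Function.Bijective fE

/-- The expansion of `γ` along the words `w`, as a labelled CQ. -/
def expLCQ {A : Type} {n : ℕ} (γ : CRPQ A n) (w : γ.I → List A) : LCQ A n where
  V := Quot (canonRel γ w)
  E := Σ i : γ.I, Fin ((w i).length)
  finV := by
    haveI := γ.finV; haveI := γ.finI
    haveI : Finite (CanonBase γ w) := by unfold CanonBase; infer_instance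
    exact Finite.of_surjective (Quot.mk (canonRel γ w))
      (fun q => Quot.inductionOn q fun a => ⟨a, rfl⟩)
  finE := by haveI := γ.finI; infer_instance
  src e := Quot.mk _ (nodeAt γ w e.1 e.2.1)
  tgt e := Quot.mk _ (nodeAt γ w e.1 (e.2.1 + 1))
  lab e := (w e.1).get e.2
  out k := Quot.mk _ (Sum.inl (γ.out k))

/-- The underlying multigraph of a labelled CQ. -/
def LCQ.toMGraph {A : Type} {n : ℕ} (P : LCQ A n) : MGraph :=
  ⟨P.V, P.E, P.src, P.tgt, Set.range P.out⟩

/-- The underlying multigraph of a CRPQ. -/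
def CRPQ.toMGraph {A : Type} {n : ℕ} (γ : CRPQ A n) : MGraph :=
  ⟨γ.V, γ.I, γ.src, γ.tgt, Set.range γ.out⟩

/-- The maximum number of atoms of a disjunct of a union of CRPQs. -/
noncomputable def maxAtoms {A : Type} {n : ℕ} (Γ : List (CRPQ A n)) : ℕ :=
  (Γ.map fun γ => Nat.card γ.I).foldr max 0

/-- Concatenation of languages. -/
def Lconcat {A : Type} (L L' : Set (List A)) : Set (List A) :=
  {w | ∃ u ∈ L, ∃ v ∈ L', w = u ++ v}

open Classical in
/-- Contraction of the internal variable `γ.tgt i₁`: the consecutive atoms `i₁, i₂`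
are replaced by a single atom labelled by the concatenated language, and the
internal variable is removed. -/
noncomputable def contractAt {A : Type} {n : ℕ} (γ : CRPQ A n) (i₁ i₂ : γ.I)
    (hne : i₁ ≠ i₂)
    (hout : ∀ k, γ.out k ≠ γ.tgt i₁)
    (hin : ∀ j, γ.tgt j = γ.tgt i₁ → j = i₁)
    (hsrc : ∀ j, γ.src j = γ.tgt i₁ → j = i₂) : CRPQ A n where
  V := {v : γ.V // v ≠ γ.tgt i₁}
  I := {i : γ.I // i ≠ i₂}
  finV := by haveI := γ.finV; infer_instance
  finI := by haveI := γ.finI; infer_instance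
  src i := ⟨γ.src i.1, fun h => i.2 (hsrc i.1 h)⟩
  tgt i :=
    if h : i.1 = i₁ then ⟨γ.tgt i₂, fun hc => hne (hin i₂ hc).symm⟩
    else ⟨γ.tgt i.1, fun hc => h (hin i.1 hc)⟩
  lang i := if i.1 = i₁ then Lconcat (γ.lang i₁) (γ.lang i₂) else γ.lang i.1
  out k := ⟨γ.out k, hout k⟩

/-- Isomorphism of CRPQs. -/
def CRPQIso {A : Type} {n : ℕ} (γ δ : CRPQ A n) : Prop :=
  ∃ (fV : γ.V → δ.V) (fI : γ.I → δ.I),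
    Function.Bijective fV ∧ Function.Bijective fI ∧
    (∀ i, δ.src (fI i) = fV (γ.src i)) ∧ (∀ i, δ.tgt (fI i) = fV (γ.tgt i)) ∧
    (∀ i, δ.lang (fI i) = γ.lang i) ∧ (∀ k, fV (γ.out k) = δ.out k)

/-- One contraction step on CRPQs (up to isomorphism). -/
def ContractStep {A : Type} {n : ℕ} (γ γ' : CRPQ A n) : Prop :=
  ∃ (i₁ i₂ : γ.I) (hne : i₁ ≠ i₂) (_ : γ.tgt i₁ = γ.src i₂)
    (hout : ∀ k, γ.out k ≠ γ.tgt i₁)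
    (hin : ∀ j, γ.tgt j = γ.tgt i₁ → j = i₁)
    (hsrc : ∀ j, γ.src j = γ.tgt i₁ → j = i₂),
    CRPQIso γ' (contractAt γ i₁ i₂ hne hout hin hsrc)

/-- The maximal under-approximation of `Γ` over the graph class `𝒞`: all CRPQs with
underlying graph in `𝒞` which are contractions of some CQ receiving a homomorphism
from some expansion of `Γ`. -/
def App {A : Type} {n : ℕ} (Γ : List (CRPQ A n)) (𝒞 : MGraph → Prop) :
    Set (CRPQ A n) :=
  {α | 𝒞 α.toMGraph ∧ ∃ γ ∈ Γ, ∃ w, γ.IsExpansionWords w ∧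
    ∃ η : CRPQ A n, η.IsCQ ∧
      (∃ u, η.IsExpansionWords u ∧ (expLCQ γ w).HomTo (expLCQ η u)) ∧
      Relation.ReflTransGen ContractStep η α}


/-!
Part (1) is built into `App`. For (2), every satisfaction of a contraction of `η` is one of `η`,
a CQ holds exactly where its expansion does, and a homomorphism `ξ → η` of expansions pulls every
satisfaction of `η` back to one of `ξ`.

For (3), let `α ∈ 𝒰` hold at `t` in `G` along words `w`, and let `η` be the CQ obtained by
expanding each atom `i` of `α` into a path of single letters spelling `w i`. Since `α` holds in
the canonical database of `η` and `𝒰 ⊆ Γ`, some `γ ∈ Γ` holds there, which yields an expansion of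
`γ` mapping homomorphically into `η`. Contracting each path of `η` back into one atom gives `α` with
atom languages `{w i}`, except that atoms with `w i = []` disappear and glue their endpoints. Its
underlying graph is thus a minor of that of `α`, so it lies in `𝒞`, and it still holds at `t`
in `G`. The intermediate stages of this contraction are the expansions of `α` along partitions of
the words `w i` into blocks; one contraction step merges the last two blocks of an atom.
-/

theorem Sigma.mk_fin_eq_mk_iff {ι : Type} {f : ι → ℕ} {i j : ι} {a : Fin (f i)} {b : Fin (f j)} :
    (⟨i, a⟩ : Σ k, Fin (f k)) = ⟨j, b⟩ ↔ i = j ∧ (a : ℕ) = b := by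
  constructor
  · rintro ⟨⟩; exact ⟨rfl, rfl⟩
  · rintro ⟨rfl, h⟩; rw [Fin.ext h]

theorem Function.Injective.bijective_restrict_ne {X Y : Type} {f : X → Y} {y₀ : Y}
    (hf : f.Injective) (hne : ∀ x, f x ≠ y₀) (hsurj : ∀ y, y ≠ y₀ → ∃ x, f x = y) :
    (fun x => (⟨f x, hne x⟩ : {y // y ≠ y₀})).Bijective :=
  ⟨fun _ _ h => hf (congrArg Subtype.val h),
    fun ⟨y, hy⟩ => let ⟨x, hx⟩ := hsurj y hy; ⟨x, Subtype.ext hx⟩⟩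

theorem Relation.eqvGen_iff_of_iff_or_eq {V : Type} {R R' : V → V → Prop} {x y : V}
    (h : ∀ u v, R' u v ↔ R u v ∨ (u = x ∧ v = y)) {a b : V} :
    EqvGen R' a b ↔ EqvGen R a b ∨ (EqvGen R a x ∧ EqvGen R b y) ∨
      (EqvGen R a y ∧ EqvGen R b x) := by
  have mono : ∀ {u v}, EqvGen R u v → EqvGen R' u v :=
    fun huv => huv.mono fun u v hr => (h u v).2 (.inl hr)
  have hxy : EqvGen R' x y := .rel _ _ ((h x y).2 (.inr ⟨rfl, rfl⟩))
  constructor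
  · intro hab
    induction hab with
    | rel a b hr =>
      rcases (h a b).1 hr with hr | ⟨rfl, rfl⟩
      · exact .inl (.rel _ _ hr)
      · exact .inr (.inl ⟨.refl _, .refl _⟩)
    | refl a => exact .inl (.refl a)
    | symm a b _ ih =>
      rcases ih with h₁ | ⟨h₁, h₂⟩ | ⟨h₁, h₂⟩
      · exact .inl h₁.symm
      · exact .inr (.inr ⟨h₂, h₁⟩)
      · exact .inr (.inl ⟨h₂, h₁⟩)
    | trans a b c _ _ ih₁ ih₂ =>
      rcases ih₁ with h₁ | ⟨h₁, h₂⟩ | ⟨h₁, h₂⟩ <;> rcases ih₂ with h₃ | ⟨h₃, h₄⟩ | ⟨h₃, h₄⟩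
      · exact .inl (h₁.trans _ _ _ h₃)
      · exact .inr (.inl ⟨h₁.trans _ _ _ h₃, h₄⟩)
      · exact .inr (.inr ⟨h₁.trans _ _ _ h₃, h₄⟩)
      · exact .inr (.inl ⟨h₁, h₃.symm.trans _ _ _ h₂⟩)
      · exact .inr (.inl ⟨h₁, h₄⟩)
      · exact .inl (h₁.trans _ _ _ h₄.symm)
      · exact .inr (.inr ⟨h₁, h₃.symm.trans _ _ _ h₂⟩)
      · exact .inl (h₁.trans _ _ _ h₄.symm)
      · exact .inr (.inr ⟨h₁, h₄⟩)
  · rintro (h₁ | ⟨h₁, h₂⟩ | ⟨h₁, h₂⟩)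
    · exact mono h₁
    · exact (mono h₁).trans _ _ _ (hxy.trans _ _ _ (mono h₂).symm)
    · exact (mono h₁).trans _ _ _ (hxy.symm.trans _ _ _ (mono h₂).symm)

theorem List.exists_eq_append_pair {X : Type} {l : List X} (h : 2 ≤ l.length) :
    ∃ rest b₁ b₂, l = rest ++ [b₁, b₂] := by
  match hl : l.reverse, h with
  | b₂ :: b₁ :: r, _ => exact ⟨r.reverse, b₁, b₂, by simpa using congrArg List.reverse hl⟩
  | [], h => simp_all
  | [_], h => have := congrArg List.length hl; simp at this; omega

namespace DB

variable {A : Type} (G : DB A)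

theorem path_of_edges : ∀ (w : List A) (f : ℕ → G.V),
    (∀ k (h : k < w.length), G.edge (f k) (w.get ⟨k, h⟩) (f (k + 1))) →
    G.path w (f 0) (f w.length)
  | [], _, _ => rfl
  | a :: w, f, he =>
    ⟨f 1, he 0 (by simp), by
      simpa using path_of_edges w (fun k => f (k + 1))
        (fun k h => by simpa using he (k + 1) (by simpa using h))⟩

theorem exists_edges_of_path : ∀ (w : List A) (u v : G.V), G.path w u v →
    ∃ f : ℕ → G.V, f 0 = u ∧ f w.length = v ∧
      ∀ k (h : k < w.length), G.edge (f k) (w.get ⟨k, h⟩) (f (k + 1))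
  | [], u, _, h => ⟨fun _ => u, rfl, h, fun _ hk => absurd hk (Nat.not_lt_zero _)⟩
  | a :: w, u, v, ⟨x, hx, hp⟩ => by
    obtain ⟨f, hf0, hfn, he⟩ := exists_edges_of_path w x v hp
    refine ⟨fun k => Nat.casesOn k u f, rfl, hfn, fun k hk => ?_⟩
    cases k with
    | zero => simpa [hf0] using hx
    | succ k => simpa using he k (by simpa using hk)

theorem exists_of_path_append : ∀ (u v : List A) (x z : G.V),
    G.path (u ++ v) x z → ∃ y, G.path u x y ∧ G.path v y z
  | [], _, x, _, h => ⟨x, rfl, h⟩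
  | _ :: u, v, _, z, ⟨y, hy, hp⟩ =>
    let ⟨b, h₁, h₂⟩ := exists_of_path_append u v y z hp
    ⟨b, ⟨y, hy, h₁⟩, h₂⟩

end DB

section

variable {A : Type} {n : ℕ}

def singletonBlocks (w : List A) : List (List A) := w.map fun a => [a]

@[simp] theorem length_singletonBlocks (w : List A) : (singletonBlocks w).length = w.length :=
  List.length_map _

@[simp] theorem getElem_singletonBlocks (w : List A) (k : ℕ)
    (hk : k < (singletonBlocks w).length) :
    (singletonBlocks w)[k] = [w[k]'(by simpa using hk)] := by
  simp [singletonBlocks]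

@[simp] theorem flatten_singletonBlocks (w : List A) : (singletonBlocks w).flatten = w := by
  induction w with
  | nil => rfl
  | cons a w ih => simpa [singletonBlocks] using ih

def mergeBlocks (bs : List (List A)) : List (List A) := if bs = [] then [] else [bs.flatten]

theorem mergeBlocks_of_length_le_one {bs : List (List A)} (h : bs.length ≤ 1) :
    mergeBlocks bs = bs := by
  match bs, h with
  | [], _ => rfl
  | [b], _ => simp [mergeBlocks]

theorem length_mergeBlocks_le (bs : List (List A)) : (mergeBlocks bs).length ≤ 1 := by
  unfold mergeBlocks; split_ifs <;> simp

@[simp] theorem flatten_mergeBlocks (bs : List (List A)) :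
    (mergeBlocks bs).flatten = bs.flatten := by
  unfold mergeBlocks; split_ifs with h <;> simp [h]

theorem mergeBlocks_append_pair (rest : List (List A)) (b₁ b₂ : List A) :
    mergeBlocks (rest ++ [b₁ ++ b₂]) = mergeBlocks (rest ++ [b₁, b₂]) := by
  simp [mergeBlocks]

def LCQ.sat (P : LCQ A n) (G : DB A) (t : Fin n → G.V) : Prop :=
  ∃ f : P.V → G.V, (∀ e, G.edge (f (P.src e)) (P.lab e) (f (P.tgt e))) ∧
    ∀ k, f (P.out k) = t k

theorem LCQ.HomTo.sat {P Q : LCQ A n} {G : DB A} {t : Fin n → G.V}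
    (h : P.HomTo Q) (hQ : Q.sat G t) : P.sat G t := by
  obtain ⟨fV, fE, hsrc, htgt, hlab, hout⟩ := h
  obtain ⟨f, hf, ht⟩ := hQ
  refine ⟨f ∘ fV, fun e => ?_, fun k => by simp [hout, ht]⟩
  simpa [hsrc, htgt, hlab] using hf (fE e)

section Expansion

variable (γ : CRPQ A n) (w : γ.I → List A)

theorem nodeAt_zero (i : γ.I) : nodeAt γ w i 0 = Sum.inl (γ.src i) := by
  unfold nodeAt CanonBase; simp

theorem nodeAt_of_length_le (i : γ.I) {k : ℕ} (hk : k ≠ 0) (hlen : (w i).length ≤ k) :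
    nodeAt γ w i k = Sum.inl (γ.tgt i) := by
  unfold nodeAt CanonBase; rw [dif_neg (by omega), if_neg hk]

theorem nodeAt_of_lt (i : γ.I) {k : ℕ} (hk : 0 < k) (hlen : k < (w i).length) :
    nodeAt γ w i k = Sum.inr ⟨i, ⟨k - 1, by omega⟩⟩ :=
  dif_pos ⟨hk, hlen⟩

variable {γ w}

theorem CRPQ.expSat_iff_sat_expLCQ {G : DB A} {t : Fin n → G.V} :
    γ.expSat w G t ↔ (expLCQ γ w).sat G t := by
  constructor
  · rintro ⟨h, hout, hpath⟩
    choose f hf0 hfn hfe using fun i => G.exists_edges_of_path (w i) _ _ (hpath i)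
    let base : CanonBase γ w → G.V
      | Sum.inl v => h v
      | Sum.inr ⟨i, k⟩ => f i (k + 1)
    have hbase : ∀ i k, k ≤ (w i).length → base (nodeAt γ w i k) = f i k := by
      intro i k hk
      rcases Nat.eq_zero_or_pos k with rfl | hk0
      · rw [nodeAt_zero, hf0]
      rcases hk.lt_or_eq with hlt | rfl
      · rw [nodeAt_of_lt γ w i hk0 hlt]
        exact congrArg (f i) (Nat.sub_add_cancel hk0)
      · rw [nodeAt_of_length_le γ w i hk0.ne' le_rfl, hfn]
    have hrel : ∀ a b, canonRel γ w a b → base a = base b := by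
      rintro _ _ ⟨i, hnil, rfl, rfl⟩
      simpa [hnil, DB.path] using hpath i
    refine ⟨Quot.lift base hrel, ?_, hout⟩
    rintro ⟨i, k, hk⟩
    change G.edge (base (nodeAt γ w i k)) _ (base (nodeAt γ w i (k + 1)))
    rw [hbase i k hk.le, hbase i (k + 1) hk]
    exact hfe i k hk
  · rintro ⟨f, hf, hout⟩
    refine ⟨fun v => f (Quot.mk _ (Sum.inl v)), hout, fun i => ?_⟩
    by_cases hnil : w i = []
    · rw [hnil]
      exact congrArg f (Quot.sound ⟨i, hnil, rfl, rfl⟩)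
    have hpath := G.path_of_edges (w i) (fun k => f (Quot.mk _ (nodeAt γ w i k)))
      fun k hk => hf ⟨i, k, hk⟩
    rwa [nodeAt_zero, nodeAt_of_length_le γ w i (by simpa using hnil) le_rfl] at hpath

theorem CRPQ.sat_iff_exists_expSat {G : DB A} {t : Fin n → G.V} :
    γ.sat G t ↔ ∃ w, γ.IsExpansionWords w ∧ γ.expSat w G t := by
  constructor
  · rintro ⟨f, hout, hpath⟩
    choose w hw hpath using hpath
    exact ⟨w, hw, f, hout, hpath⟩
  · rintro ⟨w, hw, f, hout, hpath⟩
    exact ⟨f, hout, fun i => ⟨w i, hw i, hpath i⟩⟩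

theorem CRPQ.IsCQ.expSat_of_sat (hγ : γ.IsCQ) (hw : γ.IsExpansionWords w)
    {G : DB A} {t : Fin n → G.V} (h : γ.sat G t) : γ.expSat w G t := by
  obtain ⟨f, hout, hpath⟩ := h
  refine ⟨f, hout, fun i => ?_⟩
  obtain ⟨a, ha⟩ := hγ i
  obtain ⟨v, hv, hp⟩ := hpath i
  have hwi := hw i
  rw [ha] at hv hwi
  rwa [Set.mem_singleton_iff.mp hwi, ← Set.mem_singleton_iff.mp hv]

end Expansion

theorem CRPQIso.sat {γ δ : CRPQ A n} (h : CRPQIso γ δ) {G : DB A} {t : Fin n → G.V}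
    (hγ : γ.sat G t) : δ.sat G t := by
  obtain ⟨fV, fI, hbV, hbI, hsrc, htgt, hlang, hout⟩ := h
  obtain ⟨f, hf, hpath⟩ := hγ
  let eV := Equiv.ofBijective fV hbV
  let eI := Equiv.ofBijective fI hbI
  refine ⟨f ∘ eV.symm, fun k => ?_, fun j => ?_⟩
  · simpa [← hout k, eV] using hf k
  · obtain ⟨word, hw, hp⟩ := hpath (eI.symm j)
    have hj : fI (eI.symm j) = j := eI.apply_symm_apply j
    refine ⟨word, hj ▸ (hlang _).symm ▸ hw, ?_⟩
    rw [← hj, hsrc, htgt]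
    simpa [eV] using hp

section ContractAt

variable {γ : CRPQ A n} {i₁ i₂ : γ.I} {hne : i₁ ≠ i₂} {hout : ∀ k, γ.out k ≠ γ.tgt i₁}
  {hin : ∀ j, γ.tgt j = γ.tgt i₁ → j = i₁} {hsrc : ∀ j, γ.src j = γ.tgt i₁ → j = i₂}

theorem contractAt_tgt_self :
    (contractAt γ i₁ i₂ hne hout hin hsrc).tgt ⟨i₁, hne⟩ =
      ⟨γ.tgt i₂, fun h => hne (hin i₂ h).symm⟩ := by
  simp [contractAt]

theorem contractAt_tgt_of_ne {j : {i : γ.I // i ≠ i₂}} (hj : j.1 ≠ i₁) :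
    (contractAt γ i₁ i₂ hne hout hin hsrc).tgt j = ⟨γ.tgt j.1, fun h => hj (hin _ h)⟩ := by
  simp [contractAt, hj]

theorem contractAt_lang_self :
    (contractAt γ i₁ i₂ hne hout hin hsrc).lang ⟨i₁, hne⟩ =
      Lconcat (γ.lang i₁) (γ.lang i₂) := by
  simp [contractAt]

theorem contractAt_lang_of_ne {j : {i : γ.I // i ≠ i₂}} (hj : j.1 ≠ i₁) :
    (contractAt γ i₁ i₂ hne hout hin hsrc).lang j = γ.lang j.1 := by
  simp [contractAt, hj]

/-- The removed internal variable is sent to a point where a path for `L₁ · L₂` splits. -/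
theorem sat_of_sat_contractAt (hmid : γ.tgt i₁ = γ.src i₂) {G : DB A} {t : Fin n → G.V}
    (hs : (contractAt γ i₁ i₂ hne hout hin hsrc).sat G t) : γ.sat G t := by
  classical
  obtain ⟨f, hf, hpath⟩ := hs
  obtain ⟨_, huv, hp⟩ := hpath ⟨i₁, hne⟩
  rw [contractAt_lang_self] at huv
  obtain ⟨u, hu, v, hv, rfl⟩ := huv
  obtain ⟨y, hpu, hpv⟩ := G.exists_of_path_append u v _ _ hp
  let g : γ.V → G.V := fun x => if hx : x = γ.tgt i₁ then y else f ⟨x, hx⟩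
  have hg : ∀ x (hx : x ≠ γ.tgt i₁), g x = f ⟨x, hx⟩ := fun x hx => dif_neg hx
  have hsrc₁ : γ.src i₁ ≠ γ.tgt i₁ := fun h => hne (hsrc i₁ h)
  have htgt₂ : γ.tgt i₂ ≠ γ.tgt i₁ := fun h => hne (hin i₂ h).symm
  refine ⟨g, fun k => (hg _ (hout k)).trans (hf k), fun j => ?_⟩
  by_cases hj₁ : j = i₁
  · subst hj₁
    refine ⟨u, hu, ?_⟩
    rw [hg _ hsrc₁, show g (γ.tgt j) = y from dif_pos rfl]
    exact hpu
  by_cases hj₂ : j = i₂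
  · subst hj₂
    refine ⟨v, hv, ?_⟩
    rw [show g (γ.src j) = y from dif_pos hmid.symm, hg _ htgt₂]
    rwa [contractAt_tgt_self] at hpv
  obtain ⟨word, hw, hp⟩ := hpath ⟨j, hj₂⟩
  rw [contractAt_lang_of_ne hj₁] at hw
  refine ⟨word, hw, ?_⟩
  rw [hg _ fun h => hj₂ (hsrc j h), hg _ fun h => hj₁ (hin j h)]
  rwa [contractAt_tgt_of_ne hj₁] at hp

theorem ContractStep.sat {γ γ' : CRPQ A n} (h : ContractStep γ γ') {G : DB A}
    {t : Fin n → G.V} (hs : γ'.sat G t) : γ.sat G t :=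
  let ⟨_, _, _, hmid, _, _, _, hiso⟩ := h
  sat_of_sat_contractAt hmid (hiso.sat hs)

theorem sat_of_contractions {η α : CRPQ A n} (h : Relation.ReflTransGen ContractStep η α)
    {G : DB A} {t : Fin n → G.V} (hs : α.sat G t) : η.sat G t := by
  induction h with
  | refl => exact hs
  | tail _ hstep ih => exact ih (hstep.sat hs)

end ContractAt

namespace CRPQ

variable {α : CRPQ A n} {p p' : α.I → List (List A)} {w : α.I → List A}

section BlockExpansion

variable (α)

def atomRel (S : Set α.I) : α.V → α.V → Prop :=
  fun u v => ∃ i ∈ S, u = α.src i ∧ v = α.tgt i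

/-- Vertices of the expansion of `α` in which atom `i` becomes a path of `(p i).length` atoms:
the variables of `α` (glued along atoms with no block) and the inner vertices of the paths. -/
abbrev BlockVert (p : α.I → List (List A)) : Type :=
  Quot (α.atomRel {i | p i = []}) ⊕ (Σ i : α.I, Fin ((p i).length - 1))

def blockNode (p : α.I → List (List A)) (i : α.I) (k : ℕ) : α.BlockVert p :=
  if h : 0 < k ∧ k < (p i).length then Sum.inr ⟨i, ⟨k - 1, by omega⟩⟩
  else if k = 0 then Sum.inl (Quot.mk _ (α.src i)) else Sum.inl (Quot.mk _ (α.tgt i))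

/-- The query obtained by splitting atom `i` into a path of atoms labelled by the
singleton languages of the blocks `p i`. -/
noncomputable def blockExpansion (p : α.I → List (List A)) : CRPQ A n where
  V := α.BlockVert p
  I := Σ i : α.I, Fin (p i).length
  finV := by
    have := α.finV; have := α.finI
    have : Finite (Quot (α.atomRel {i | p i = []})) :=
      Finite.of_surjective (Quot.mk _) Quot.mk_surjective
    infer_instance
  finI := by have := α.finI; infer_instance
  src e := α.blockNode p e.1 e.2.1
  tgt e := α.blockNode p e.1 (e.2.1 + 1)
  lang e := {(p e.1).get e.2}
  out k := Sum.inl (Quot.mk _ (α.out k))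

variable {α} (p) (i : α.I)

theorem blockNode_zero : α.blockNode p i 0 = Sum.inl (Quot.mk _ (α.src i)) := by
  simp [blockNode]

theorem blockNode_of_length_le {k : ℕ} (hk : k ≠ 0) (hlen : (p i).length ≤ k) :
    α.blockNode p i k = Sum.inl (Quot.mk _ (α.tgt i)) := by
  rw [blockNode, dif_neg (by omega), if_neg hk]

theorem blockNode_of_lt {k : ℕ} (hk : 0 < k) (hlen : k < (p i).length) :
    α.blockNode p i k = Sum.inr ⟨i, ⟨k - 1, by omega⟩⟩ :=
  dif_pos ⟨hk, hlen⟩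

theorem blockNode_eq_inr_iff {k : ℕ} {j : α.I} (m : Fin ((p j).length - 1)) :
    α.blockNode p i k = Sum.inr ⟨j, m⟩ ↔ i = j ∧ k = m + 1 := by
  unfold blockNode
  split_ifs with h h0
  · rw [Sum.inr.injEq, Sigma.mk_fin_eq_mk_iff (f := fun i => (p i).length - 1)]
    exact and_congr_right fun _ => by simp only; omega
  all_goals
    simp only [false_iff, not_and]
    rintro rfl rfl
    have := m.2
    omega

end BlockExpansion

/-- For a CQ, its canonical database. -/
def letterDB (P : CRPQ A n) : DB A :=
  ⟨P.V, fun x a y => ∃ i, P.src i = x ∧ P.tgt i = y ∧ [a] ∈ P.lang i⟩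

theorem isCQ_blockExpansion_singletonBlocks :
    (α.blockExpansion fun i => singletonBlocks (w i)).IsCQ :=
  fun ⟨i, k⟩ => ⟨(w i)[k.1]'(by simpa using k.2), by simp [blockExpansion]⟩

theorem sat_letterDB_blockExpansion (hw : α.IsExpansionWords w) :
    let η := α.blockExpansion fun i => singletonBlocks (w i)
    α.sat η.letterDB η.out := by
  intro η
  refine ⟨fun v => Sum.inl (Quot.mk _ v), fun _ => rfl, fun i => ⟨w i, hw i, ?_⟩⟩
  by_cases hnil : w i = []
  · rw [hnil]
    exact congrArg Sum.inl (Quot.sound ⟨i, by simp [hnil, singletonBlocks], rfl, rfl⟩)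
  have hpath := η.letterDB.path_of_edges (w i) (α.blockNode (fun i => singletonBlocks (w i)) i)
    fun k hk =>
    ⟨⟨i, ⟨k, by simpa using hk⟩⟩, rfl, rfl, by simp [η, blockExpansion]⟩
  rwa [blockNode_zero, blockNode_of_length_le _ _ (by simpa using hnil) (by simp)] at hpath

theorem IsCQ.exists_isExpansionWords {η : CRPQ A n} (hη : η.IsCQ) :
    ∃ u, η.IsExpansionWords u := by
  choose a ha using hη
  exact ⟨fun i => [a i], fun i => (ha i).symm ▸ rfl⟩

/-- Chandra–Merlin: a labelled CQ satisfied in the canonical database of an expansion of a CQ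
maps homomorphically into that expansion. -/
theorem IsCQ.homTo_expLCQ {η : CRPQ A n} (hη : η.IsCQ) {u : η.I → List A}
    (hu : η.IsExpansionWords u) {P : LCQ A n} (hP : P.sat η.letterDB η.out) :
    P.HomTo (expLCQ η u) := by
  obtain ⟨f, hf, hout⟩ := hP
  choose e hsrc htgt hlab using hf
  choose a ha using hη
  have hu₁ : ∀ i, u i = [a i] := fun i => by simpa [ha] using hu i
  have hlen : ∀ i, (u i).length = 1 := fun i => by simp [hu₁]
  refine ⟨fun v => Quot.mk _ (Sum.inl (f v)), fun x => ⟨e x, ⟨0, by simp [hlen]⟩⟩,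
    fun x => ?_, fun x => ?_, fun x => ?_, fun k => congrArg _ (congrArg _ (hout k))⟩
  · change Quot.mk _ (nodeAt η u (e x) 0) = _
    rw [nodeAt_zero, hsrc]
  · change Quot.mk _ (nodeAt η u (e x) 1) = _
    rw [nodeAt_of_length_le η u _ one_ne_zero (hlen _).le, htgt]
  · have := hlab x
    simp only [ha, Set.mem_singleton_iff, List.cons.injEq, and_true] at this
    simp [expLCQ, hu₁, this]

theorem sat_blockExpansion_of_expSat {w : α.I → List A} (hp : ∀ i, (p i).length ≤ 1)
    (hflat : ∀ i, (p i).flatten = w i) {G : DB A} {t : Fin n → G.V} (h : α.expSat w G t) :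
    (α.blockExpansion p).sat G t := by
  obtain ⟨f, hout, hpath⟩ := h
  have hresp : ∀ a b, α.atomRel {i | p i = []} a b → f a = f b := by
    rintro _ _ ⟨i, hnil, rfl, rfl⟩
    have hw : w i = [] := by rw [← hflat, show p i = [] from hnil, List.flatten_nil]
    simpa [hw, DB.path] using hpath i
  refine ⟨Sum.elim (Quot.lift f hresp) fun x => absurd x.2.2 (by have := hp x.1; omega),
    hout, fun ⟨i, k⟩ => ⟨(p i).get k, rfl, ?_⟩⟩
  obtain ⟨b, hb⟩ : ∃ b, p i = [b] :=
    List.length_eq_one_iff.mp (le_antisymm (hp i) (Nat.one_le_iff_ne_zero.mpr (by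
      have := k.2; omega)))
  have hk : k.1 = 0 := by have := k.2; simp [hb] at this; omega
  have hbw : b = w i := by simpa [hb] using hflat i
  change G.path _ (Sum.elim _ _ (α.blockNode p i k.1)) (Sum.elim _ _ (α.blockNode p i (k.1 + 1)))
  rw [hk, zero_add, blockNode_zero, blockNode_of_length_le p i one_ne_zero (hp i)]
  simpa [List.getElem_of_eq hb, hk, hbw] using hpath i

def blockVertEmbed (hnil : ∀ i, p' i = [] ↔ p i = [])
    (hle : ∀ i, (p' i).length ≤ (p i).length) : α.BlockVert p' → α.BlockVert p :=
  Sum.map (Quot.congrRight fun _ _ => by simp only [atomRel, Set.mem_ofPred_eq, hnil])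
    (Sigma.map id fun i => Fin.castLE (Nat.sub_le_sub_right (hle i) 1))

section BlockVertEmbed

variable {hnil : ∀ i, p' i = [] ↔ p i = []} {hle : ∀ i, (p' i).length ≤ (p i).length}

theorem blockVertEmbed_injective : (blockVertEmbed hnil hle).Injective :=
  (Equiv.injective _).sumMap
    (Function.injective_id.sigma_map fun _ => Fin.castLE_injective _)

theorem blockVertEmbed_blockNode {i : α.I} {k : ℕ} (hk : k < (p' i).length) :
    blockVertEmbed hnil hle (α.blockNode p' i k) = α.blockNode p i k := by
  rcases Nat.eq_zero_or_pos k with rfl | hk₀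
  · rw [blockNode_zero, blockNode_zero]; rfl
  · rw [blockNode_of_lt p' i hk₀ hk, blockNode_of_lt p i hk₀ (lt_of_lt_of_le hk (hle i))]
    rfl

theorem blockVertEmbed_blockNode_length (i : α.I) :
    blockVertEmbed hnil hle (α.blockNode p' i (p' i).length) =
      α.blockNode p i (p i).length := by
  by_cases h : p' i = []
  · rw [h, (hnil i).mp h, List.length_nil, blockNode_zero, blockNode_zero]; rfl
  · have h' : p i ≠ [] := fun h' => h ((hnil i).mpr h')
    rw [blockNode_of_length_le p' i (by simpa using h) le_rfl,
      blockNode_of_length_le p i (by simpa using h') le_rfl]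
    rfl

end BlockVertEmbed

theorem blockExpansion_tgt_eq_inr_iff {e : (α.blockExpansion p).I} {i : α.I}
    {m : Fin ((p i).length - 1)} :
    (α.blockExpansion p).tgt e = Sum.inr ⟨i, m⟩ ↔ e = ⟨i, ⟨m, by omega⟩⟩ := by
  obtain ⟨j, k⟩ := e
  change α.blockNode p j (k + 1) = _ ↔ (⟨j, k⟩ : Σ i, Fin (p i).length) = _
  rw [blockNode_eq_inr_iff, Sigma.mk_fin_eq_mk_iff (f := fun i => (p i).length)]
  simp

theorem blockExpansion_src_eq_inr_iff {e : (α.blockExpansion p).I} {i : α.I}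
    {m : Fin ((p i).length - 1)} :
    (α.blockExpansion p).src e = Sum.inr ⟨i, m⟩ ↔ e = ⟨i, ⟨m + 1, by omega⟩⟩ := by
  obtain ⟨j, k⟩ := e
  change α.blockNode p j k = _ ↔ (⟨j, k⟩ : Σ i, Fin (p i).length) = _
  rw [blockNode_eq_inr_iff, Sigma.mk_fin_eq_mk_iff (f := fun i => (p i).length)]

def blockEdgeEmbed (hle : ∀ i, (p' i).length ≤ (p i).length) :
    (α.blockExpansion p').I → (α.blockExpansion p).I :=
  Sigma.map id fun i => Fin.castLE (hle i)

theorem blockEdgeEmbed_injective {hle : ∀ i, (p' i).length ≤ (p i).length} :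
    (blockEdgeEmbed hle).Injective :=
  Function.injective_id.sigma_map fun _ => Fin.castLE_injective _

structure MergesLastBlocks (p p' : α.I → List (List A)) (i₀ : α.I) (rest : List (List A))
    (b₁ b₂ : List A) : Prop where
  eq_left : p i₀ = rest ++ [b₁, b₂]
  eq_right : p' i₀ = rest ++ [b₁ ++ b₂]
  eq_of_ne : ∀ j ≠ i₀, p' j = p j

namespace MergesLastBlocks

variable {i₀ : α.I} {rest : List (List A)} {b₁ b₂ : List A}

theorem lengths (h : MergesLastBlocks p p' i₀ rest b₁ b₂) {j : α.I} (hj : j = i₀) :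
    (p j).length = rest.length + 2 ∧ (p' j).length = rest.length + 1 := by
  subst hj; simp [h.eq_left, h.eq_right]

theorem length_le (h : MergesLastBlocks p p' i₀ rest b₁ b₂) (j : α.I) :
    (p' j).length ≤ (p j).length := by
  by_cases hj : j = i₀
  · have := h.lengths hj; omega
  · rw [h.eq_of_ne j hj]

theorem eq_nil_iff (h : MergesLastBlocks p p' i₀ rest b₁ b₂) (j : α.I) :
    p' j = [] ↔ p j = [] := by
  by_cases hj : j = i₀
  · subst hj; simp [h.eq_left, h.eq_right]
  · rw [h.eq_of_ne j hj]

/-- The index of the inner vertex between the two merged atoms. -/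
theorem mid_lt (h : MergesLastBlocks p p' i₀ rest b₁ b₂) :
    rest.length < (p i₀).length - 1 := by
  have := h.lengths rfl; omega

theorem last_lt (h : MergesLastBlocks p p' i₀ rest b₁ b₂) :
    rest.length + 1 < (p i₀).length := by
  have := h.lengths rfl; omega

theorem last_lt_right (h : MergesLastBlocks p p' i₀ rest b₁ b₂) :
    rest.length < (p' i₀).length := by
  have := h.lengths rfl; omega

theorem blockVertEmbed_ne (h : MergesLastBlocks p p' i₀ rest b₁ b₂) (x : α.BlockVert p') :
    blockVertEmbed h.eq_nil_iff h.length_le x ≠ Sum.inr ⟨i₀, ⟨rest.length, h.mid_lt⟩⟩ := by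
  rcases x with _ | ⟨j, m⟩ <;> intro hx
  · exact Sum.inl_ne_inr hx
  · obtain ⟨hj, hm⟩ := (Sigma.mk_fin_eq_mk_iff (f := fun i => (p i).length - 1)).mp
      (Sum.inr_injective hx)
    change j = i₀ at hj
    have := h.lengths hj
    have : (m : ℕ) < (p' j).length - 1 := m.2
    simp only [Fin.val_castLE] at hm
    omega

theorem exists_blockVertEmbed_eq (h : MergesLastBlocks p p' i₀ rest b₁ b₂) (y : α.BlockVert p)
    (hy : y ≠ Sum.inr ⟨i₀, ⟨rest.length, h.mid_lt⟩⟩) :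
    ∃ x, blockVertEmbed h.eq_nil_iff h.length_le x = y := by
  rcases y with q | ⟨j, m⟩
  · obtain ⟨a, rfl⟩ := Quot.mk_surjective q
    exact ⟨Sum.inl (Quot.mk _ a), rfl⟩
  have hm : (m : ℕ) < (p' j).length - 1 := by
    have : (m : ℕ) < (p j).length - 1 := m.2
    by_cases hj : j = i₀
    · have := h.lengths hj
      have : (m : ℕ) ≠ rest.length := fun hm => hy (congrArg Sum.inr
        ((Sigma.mk_fin_eq_mk_iff (f := fun i => (p i).length - 1)).mpr ⟨hj, hm⟩))
      omega
    · rwa [h.eq_of_ne j hj]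
  exact ⟨Sum.inr ⟨j, ⟨m, hm⟩⟩, rfl⟩

theorem blockEdgeEmbed_ne (h : MergesLastBlocks p p' i₀ rest b₁ b₂)
    (e : (α.blockExpansion p').I) :
    blockEdgeEmbed h.length_le e ≠ ⟨i₀, ⟨rest.length + 1, h.last_lt⟩⟩ := by
  obtain ⟨j, m⟩ := e
  intro he
  obtain ⟨hj, hm⟩ := (Sigma.mk_fin_eq_mk_iff (f := fun i => (p i).length)).mp he
  change j = i₀ at hj
  have := h.lengths hj
  have : (m : ℕ) < (p' j).length := m.2
  simp only [Fin.val_castLE] at hm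
  omega

theorem exists_blockEdgeEmbed_eq (h : MergesLastBlocks p p' i₀ rest b₁ b₂)
    (e : (α.blockExpansion p).I)
    (he : e ≠ ⟨i₀, ⟨rest.length + 1, h.last_lt⟩⟩) :
    ∃ e', blockEdgeEmbed h.length_le e' = e := by
  obtain ⟨j, m⟩ := e
  have hm : (m : ℕ) < (p' j).length := by
    have : (m : ℕ) < (p j).length := m.2
    by_cases hj : j = i₀
    · have := h.lengths hj
      have : (m : ℕ) ≠ rest.length + 1 := fun hm =>
        he ((Sigma.mk_fin_eq_mk_iff (f := fun i => (p i).length)).mpr ⟨hj, hm⟩)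
      omega
    · rwa [h.eq_of_ne j hj]
  exact ⟨⟨j, ⟨m, hm⟩⟩, rfl⟩

theorem tgt_blockEdgeEmbed (h : MergesLastBlocks p p' i₀ rest b₁ b₂)
    {e : (α.blockExpansion p').I} (he : e ≠ ⟨i₀, ⟨rest.length, h.last_lt_right⟩⟩) :
    (α.blockExpansion p).tgt (blockEdgeEmbed h.length_le e) =
      blockVertEmbed h.eq_nil_iff h.length_le ((α.blockExpansion p').tgt e) := by
  obtain ⟨j, m⟩ := e
  change α.blockNode p j (m + 1) = blockVertEmbed _ _ (α.blockNode p' j (m + 1))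
  rcases (show (m : ℕ) + 1 ≤ (p' j).length from m.2).lt_or_eq with hm | hm
  · exact (blockVertEmbed_blockNode hm).symm
  · have hj : j ≠ i₀ := fun hj => he <|
      (Sigma.mk_fin_eq_mk_iff (f := fun i => (p' i).length)).mpr ⟨hj, by
        have := h.lengths hj; simp only; omega⟩
    rw [hm, blockVertEmbed_blockNode_length, h.eq_of_ne j hj]

theorem tgt_last (h : MergesLastBlocks p p' i₀ rest b₁ b₂) :
    (α.blockExpansion p).tgt ⟨i₀, ⟨rest.length + 1, h.last_lt⟩⟩ =
      blockVertEmbed h.eq_nil_iff h.length_le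
        ((α.blockExpansion p').tgt ⟨i₀, ⟨rest.length, h.last_lt_right⟩⟩) := by
  change α.blockNode p i₀ (rest.length + 1 + 1) =
    blockVertEmbed _ _ (α.blockNode p' i₀ (rest.length + 1))
  have := h.lengths rfl
  rw [← this.1, ← this.2, blockVertEmbed_blockNode_length]

theorem lang_blockEdgeEmbed (h : MergesLastBlocks p p' i₀ rest b₁ b₂)
    {e : (α.blockExpansion p').I} (he : e ≠ ⟨i₀, ⟨rest.length, h.last_lt_right⟩⟩) :
    (α.blockExpansion p).lang (blockEdgeEmbed h.length_le e) = (α.blockExpansion p').lang e := by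
  obtain ⟨j, m⟩ := e
  by_cases hj : j = i₀
  · subst hj
    have hm : (m : ℕ) < rest.length := by
      have := h.lengths rfl
      have : (m : ℕ) ≠ rest.length := fun hm => he <|
        (Sigma.mk_fin_eq_mk_iff (f := fun i => (p' i).length)).mpr ⟨rfl, hm⟩
      omega
    simp [blockExpansion, blockEdgeEmbed, Sigma.map, List.getElem_of_eq h.eq_left,
      List.getElem_of_eq h.eq_right, List.getElem_append_left hm]
  · simp [blockExpansion, blockEdgeEmbed, Sigma.map, List.getElem_of_eq (h.eq_of_ne j hj)]

theorem lang_last (h : MergesLastBlocks p p' i₀ rest b₁ b₂) :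
    Lconcat ((α.blockExpansion p).lang ⟨i₀, ⟨rest.length, Nat.lt_of_succ_lt h.last_lt⟩⟩)
        ((α.blockExpansion p).lang ⟨i₀, ⟨rest.length + 1, h.last_lt⟩⟩) =
      (α.blockExpansion p').lang ⟨i₀, ⟨rest.length, h.last_lt_right⟩⟩ := by
  simp [blockExpansion, Lconcat, List.getElem_of_eq h.eq_left, List.getElem_of_eq h.eq_right]

theorem contractStep (h : MergesLastBlocks p p' i₀ rest b₁ b₂) :
    ContractStep (α.blockExpansion p) (α.blockExpansion p') := by
  let i₁ : (α.blockExpansion p).I := ⟨i₀, ⟨rest.length, Nat.lt_of_succ_lt h.last_lt⟩⟩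
  let i₂ : (α.blockExpansion p).I := ⟨i₀, ⟨rest.length + 1, h.last_lt⟩⟩
  have hmid : (α.blockExpansion p).tgt i₁ = Sum.inr ⟨i₀, ⟨rest.length, h.mid_lt⟩⟩ :=
    blockNode_of_lt (k := rest.length + 1) p i₀ (Nat.succ_pos _) h.last_lt
  have hne : i₁ ≠ i₂ := fun h₁₂ => by
    simpa using ((Sigma.mk_fin_eq_mk_iff (f := fun i => (p i).length)).mp h₁₂).2
  have hV : ∀ x, blockVertEmbed h.eq_nil_iff h.length_le x ≠ (α.blockExpansion p).tgt i₁ :=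
    fun x => hmid ▸ h.blockVertEmbed_ne x
  have hE₁ : ∀ e, e ≠ ⟨i₀, ⟨rest.length, h.last_lt_right⟩⟩ →
      blockEdgeEmbed h.length_le e ≠ i₁ :=
    fun e he he₁ => he (blockEdgeEmbed_injective (he₁.trans rfl))
  refine ⟨i₁, i₂, hne, rfl, fun k => hmid ▸ Sum.inl_ne_inr,
    fun e he => blockExpansion_tgt_eq_inr_iff.mp (he.trans hmid),
    fun e he => blockExpansion_src_eq_inr_iff.mp (he.trans hmid),
    fun x => ⟨_, hV x⟩, fun e => ⟨_, h.blockEdgeEmbed_ne e⟩,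
    blockVertEmbed_injective.bijective_restrict_ne hV fun y hy =>
      h.exists_blockVertEmbed_eq y (hmid ▸ hy),
    blockEdgeEmbed_injective.bijective_restrict_ne h.blockEdgeEmbed_ne
      h.exists_blockEdgeEmbed_eq,
    fun e => Subtype.ext
      (blockVertEmbed_blockNode (hnil := h.eq_nil_iff) (hle := h.length_le) e.2.2).symm,
    fun e => ?_, fun e => ?_, fun k => rfl⟩
  · by_cases he : e = ⟨i₀, ⟨rest.length, h.last_lt_right⟩⟩
    · subst he
      exact (contractAt_tgt_self (i₁ := i₁)).trans (Subtype.ext h.tgt_last)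
    · exact (contractAt_tgt_of_ne (hE₁ e he)).trans (Subtype.ext (h.tgt_blockEdgeEmbed he))
  · by_cases he : e = ⟨i₀, ⟨rest.length, h.last_lt_right⟩⟩
    · subst he
      exact (contractAt_lang_self (i₁ := i₁)).trans h.lang_last
    · exact (contractAt_lang_of_ne (hE₁ e he)).trans (h.lang_blockEdgeEmbed he)

end MergesLastBlocks

theorem reflTransGen_contractStep_mergeBlocks (α : CRPQ A n) (q : α.I → List (List A)) :
    Relation.ReflTransGen ContractStep (α.blockExpansion q)
      (α.blockExpansion fun i => mergeBlocks (q i)) := by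
  classical
  have := α.finI
  have := Fintype.ofFinite α.I
  induction hN : ∑ i, (q i).length using Nat.strong_induction_on generalizing q with
  | _ N ih =>
  by_cases hq : ∀ i, (q i).length ≤ 1
  · rw [funext fun i => mergeBlocks_of_length_le_one (hq i)]
  obtain ⟨i₀, hi₀⟩ := not_forall.mp hq
  obtain ⟨rest, b₁, b₂, hsplit⟩ := List.exists_eq_append_pair (not_le.mp hi₀)
  let q' := Function.update q i₀ (rest ++ [b₁ ++ b₂])
  have hm : MergesLastBlocks q q' i₀ rest b₁ b₂ :=
    ⟨hsplit, by simp [q'], fun j hj => by simp [q', hj]⟩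
  have hlt : ∑ i, (q' i).length < N := hN ▸ Finset.sum_lt_sum (fun j _ => hm.length_le j)
    ⟨i₀, Finset.mem_univ _, by have := hm.lengths rfl; omega⟩
  have hsame : (fun i => mergeBlocks (q' i)) = fun i => mergeBlocks (q i) := by
    funext j
    by_cases hj : j = i₀
    · rw [hj, hm.eq_right, hsplit, mergeBlocks_append_pair]
    · rw [hm.eq_of_ne j hj]
  exact .head hm.contractStep (hsame ▸ ih _ hlt q' rfl)

section ContractedGraph

variable (α)

/-- The underlying graph of `α` with the atoms in `S` contracted. -/
def contractedGraph (S : Set α.I) : MGraph where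
  V := Quot (α.atomRel S)
  E := {i // i ∉ S}
  src e := Quot.mk _ (α.src e.1)
  tgt e := Quot.mk _ (α.tgt e.1)
  out := Quot.mk _ '' Set.range α.out

theorem isIso_contractedGraph_empty : IsIso α.toMGraph (α.contractedGraph ∅) := by
  have hR : ∀ {u v}, Relation.EqvGen (α.atomRel ∅) u v → u = v := fun huv => by
    induction huv with
    | rel _ _ hr => exact absurd hr.choose_spec.1 (Set.notMem_empty _)
    | refl => rfl
    | symm _ _ _ ih => exact ih.symm
    | trans _ _ _ _ _ ih₁ ih₂ => exact ih₁.trans ih₂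
  refine ⟨Quot.mk _, fun i => ⟨i, Set.notMem_empty i⟩,
    ⟨fun u v huv => hR (Quot.eqvGen_exact huv), Quot.mk_surjective⟩,
    ⟨fun i j hij => congrArg Subtype.val hij, fun e => ⟨e.1, rfl⟩⟩, fun _ => rfl, fun _ => rfl⟩

theorem isEdgeContraction_contractedGraph_insert {S : Set α.I} {i₀ : α.I} (hi₀ : i₀ ∉ S) :
    IsEdgeContraction (α.contractedGraph S) (α.contractedGraph (insert i₀ S)) := by
  have hrel : ∀ u v, α.atomRel (insert i₀ S) u v ↔
      α.atomRel S u v ∨ (u = α.src i₀ ∧ v = α.tgt i₀) := by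
    intro u v
    simp only [atomRel, Set.mem_insert_iff, or_and_right, exists_or, exists_eq_left]
    exact or_comm
  refine ⟨⟨i₀, hi₀⟩, Quot.map id fun u v huv => (hrel u v).2 (.inl huv),
    fun e => ⟨e.1.1, fun h => (Set.mem_insert_iff.mp h).elim (fun h => e.2 (Subtype.ext h)) e.1.2⟩,
    Quot.map_surjective _ Function.surjective_id, ⟨?_, ?_⟩, ?_, fun _ => rfl, fun _ => rfl⟩
  · exact fun e e' h => Subtype.ext (Subtype.ext (congrArg Subtype.val h :))
  · exact fun e => ⟨⟨⟨e.1, fun h => e.2 (.inr h)⟩, fun h => e.2 (.inl (congrArg Subtype.val h))⟩,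
      rfl⟩
  · rintro ⟨a⟩ ⟨b⟩
    change Quot.mk _ a = Quot.mk _ b ↔ Quot.mk _ a = Quot.mk _ b ∨
      (Quot.mk _ a = Quot.mk _ (α.src i₀) ∧ Quot.mk _ b = Quot.mk _ (α.tgt i₀)) ∨
      (Quot.mk _ a = Quot.mk _ (α.tgt i₀) ∧ Quot.mk _ b = Quot.mk _ (α.src i₀))
    simp only [Quot.eq]
    exact Relation.eqvGen_iff_of_iff_or_eq hrel

theorem isMinorOf_contractedGraph (S : Set α.I) : IsMinorOf (α.contractedGraph S) α.toMGraph := by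
  have := α.finI
  refine Set.Finite.induction_on S (Set.toFinite S) ?_ fun hi _ ih => ?_
  · exact .single (.inl α.isIso_contractedGraph_empty)
  · exact ih.tail (.inr (.inr (.inr (α.isEdgeContraction_contractedGraph_insert hi))))

end ContractedGraph

theorem isIso_contractedGraph_blockExpansion {p : α.I → List (List A)}
    (hp : ∀ i, (p i).length ≤ 1) :
    IsIso (α.contractedGraph {i | p i = []}) (α.blockExpansion p).toMGraph := by
  have hpos : ∀ i, p i ≠ [] → 0 < (p i).length := fun i hi => List.length_pos_iff.mpr hi
  refine ⟨Sum.inl, fun e => ⟨e.1, ⟨0, hpos e.1 e.2⟩⟩, ⟨Sum.inl_injective, ?_⟩, ⟨?_, ?_⟩,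
    fun e => blockNode_zero p e.1, fun e => blockNode_of_length_le p e.1 one_ne_zero (hp e.1)⟩
  · rintro (q | ⟨i, m⟩)
    · exact ⟨q, rfl⟩
    · exact absurd m.2 (by have := hp i; omega)
  · exact fun e e' h => Subtype.ext (congrArg Sigma.fst h :)
  · rintro ⟨i, k⟩
    have hi : p i ≠ [] := List.ne_nil_of_length_pos (Nat.zero_lt_of_lt k.2)
    exact ⟨⟨i, hi⟩, (Sigma.mk_fin_eq_mk_iff (f := fun i => (p i).length)).mpr
      ⟨rfl, by have := k.2; have := hp i; simp only; omega⟩⟩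

theorem isMinorOf_blockExpansion {p : α.I → List (List A)} (hp : ∀ i, (p i).length ≤ 1) :
    IsMinorOf (α.blockExpansion p).toMGraph α.toMGraph :=
  (α.isMinorOf_contractedGraph _).tail (.inl (isIso_contractedGraph_blockExpansion hp))

end CRPQ

theorem sat_of_mem_App {Γ : List (CRPQ A n)} {𝒞 : MGraph → Prop} {α : CRPQ A n}
    (hα : α ∈ App Γ 𝒞) {G : DB A} {t : Fin n → G.V} (hs : α.sat G t) :
    ∃ γ ∈ Γ, γ.sat G t := by
  obtain ⟨-, γ, hγ, w, hw, η, hη, ⟨u, hu, hom⟩, hcontr⟩ := hα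
  have hηs : (expLCQ η u).sat G t :=
    CRPQ.expSat_iff_sat_expLCQ.mp (hη.expSat_of_sat hu (sat_of_contractions hcontr hs))
  exact ⟨γ, hγ,
    CRPQ.sat_iff_exists_expSat.mpr ⟨w, hw, CRPQ.expSat_iff_sat_expLCQ.mpr (hom.sat hηs)⟩⟩

theorem exists_mem_App_sat {Γ : List (CRPQ A n)} {𝒞 : MGraph → Prop}
    (hclosed : ∀ G H, 𝒞 G → IsMinorOf H G → 𝒞 H) {α : CRPQ A n} (hα : 𝒞 α.toMGraph)
    (hcont : ∀ (G : DB A) (t : Fin n → G.V), α.sat G t → ∃ γ ∈ Γ, γ.sat G t)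
    {G : DB A} {t : Fin n → G.V} (hs : α.sat G t) : ∃ α' ∈ App Γ 𝒞, α'.sat G t := by
  obtain ⟨w, hw, hexp⟩ := CRPQ.sat_iff_exists_expSat.mp hs
  let η := α.blockExpansion fun i => singletonBlocks (w i)
  have hη : η.IsCQ := CRPQ.isCQ_blockExpansion_singletonBlocks
  obtain ⟨u, hu⟩ := hη.exists_isExpansionWords
  obtain ⟨γ, hγ, hγs⟩ := hcont _ _ (CRPQ.sat_letterDB_blockExpansion hw)
  obtain ⟨w', hw', hγexp⟩ := CRPQ.sat_iff_exists_expSat.mp hγs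
  have hlen : ∀ i, (mergeBlocks (singletonBlocks (w i))).length ≤ 1 :=
    fun i => length_mergeBlocks_le _
  refine ⟨α.blockExpansion fun i => mergeBlocks (singletonBlocks (w i)),
    ⟨hclosed _ _ hα (CRPQ.isMinorOf_blockExpansion hlen), γ, hγ, w', hw', η, hη,
      ⟨u, hu, hη.homTo_expLCQ hu (CRPQ.expSat_iff_sat_expLCQ.mp hγexp)⟩,
      α.reflTransGen_contractStep_mergeBlocks _⟩,
    CRPQ.sat_blockExpansion_of_expSat hlen (fun i => by simp) hexp⟩

end

/-- For a minor-closed class `𝒞`, `App Γ 𝒞` is the maximal under-approximation of `Γ`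
by (possibly infinite) unions of CRPQs with underlying graphs in `𝒞`:
(1) all its members have underlying graph in `𝒞`; (2) it is contained in `Γ`;
(3) any union of CRPQs over `𝒞` contained in `Γ` is contained in it. -/
theorem maximal_under_approximation {A : Type} {n : ℕ}
    (𝒞 : MGraph → Prop) (hclosed : ∀ G H, 𝒞 G → IsMinorOf H G → 𝒞 H)
    (Γ : List (CRPQ A n)) :
    (∀ α ∈ App Γ 𝒞, 𝒞 α.toMGraph) ∧
    (∀ (G : DB A) (t : Fin n → G.V),
      (∃ α ∈ App Γ 𝒞, α.sat G t) → (∃ γ ∈ Γ, γ.sat G t)) ∧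
    (∀ 𝒰 : Set (CRPQ A n), (∀ α ∈ 𝒰, 𝒞 α.toMGraph) →
      (∀ (G : DB A) (t : Fin n → G.V),
        (∃ α ∈ 𝒰, α.sat G t) → (∃ γ ∈ Γ, γ.sat G t)) →
      (∀ (G : DB A) (t : Fin n → G.V),
        (∃ α ∈ 𝒰, α.sat G t) → (∃ α ∈ App Γ 𝒞, α.sat G t))) :=
  ⟨fun _ hα => hα.1, fun _ _ ⟨_, hα, hs⟩ => sat_of_mem_App hα hs,
    fun _ h𝒞 hcont _ _ ⟨α, hα, hs⟩ =>
      exists_mem_App_sat hclosed (h𝒞 α hα) (fun G t h => hcont G t ⟨α, hα, h⟩) hs⟩
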